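/- Let γ > 1 and define, for q = (q₁,…,q₈) ∈ ℝ⁸ with q₁ > 0, the pressure p(q) = (γ−1)·(q₅ − (q₂² + q₃² + q₄²)/(2q₁) − (q₆² + q₇² + q₈²)/2), the physical entropy s(q) = ln p(q) − γ ln q₁, and the entropy density U(q) = −q₁·s(q)/(γ−1). Then at every point q with q₁ > 0 and p(q) > 0, U is differentiable and its gradient equals the entropy variables: ∇U(q) = ((γ−s)/(γ−1) − ρ‖u⃗‖²/(2p), ρu/p, ρv/p, ρw/p, −ρ/p, ρB₁/p, ρB₂/p, ρB₃/p), where ρ = q₁, u = q₂/q₁, v = q₃/q₁, w = q₄/q₁, B₁ = q₆, B₂ = q₇, B₃ = q₈, p = p(q), s = s(q), and ‖u⃗‖² = u² + v² + w². -/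

import Mathlib

/-!
Since `d(ρ s) = (s - γ) dρ + (ρ / p) dp` and
`∇p = (γ - 1) (‖u‖² / 2, -u, -v, -w, 1, -B₁, -B₂, -B₃)`, the gradient of `U = -ρ s / (γ - 1)` is
`((γ - s) e₀ - (ρ / p) ∇p) / (γ - 1)`, which is the vector of entropy variables.
-/

open Real

noncomputable section

/-- pressure as a function of the conservative variables q = (ρ, ρu, ρv, ρw, ρe, B₁, B₂, B₃) -/
def presQ (γ : ℝ) (q : EuclideanSpace ℝ (Fin 8)) : ℝ :=
  (γ - 1) * (q 4 - (q 1 ^ 2 + q 2 ^ 2 + q 3 ^ 2) / (2 * q 0) - (q 5 ^ 2 + q 6 ^ 2 + q 7 ^ 2) / 2)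

/-- physical entropy s = ln p − γ ln ρ -/
def entSQ (γ : ℝ) (q : EuclideanSpace ℝ (Fin 8)) : ℝ :=
  Real.log (presQ γ q) - γ * Real.log (q 0)

/-- entropy density U = −ρs/(γ−1) -/
def entUQ (γ : ℝ) (q : EuclideanSpace ℝ (Fin 8)) : ℝ :=
  -(q 0 * entSQ γ q) / (γ - 1)

theorem EuclideanSpace.hasGradientAt_apply {ι : Type*} [Fintype ι] [DecidableEq ι]
    (i : ι) (x : EuclideanSpace ℝ ι) :
    HasGradientAt (fun y : EuclideanSpace ℝ ι => y i) (EuclideanSpace.single i 1) x := by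
  rw [hasGradientAt_iff_hasFDerivAt]
  refine (PiLp.hasFDerivAt_apply (𝕜 := ℝ) 2 x i).congr_fderiv ?_
  ext y
  simp [EuclideanSpace.inner_single_left]

section GradientCalculus

variable {F : Type*} [NormedAddCommGroup F] [InnerProductSpace ℝ F] [CompleteSpace F]
  {f g : F → ℝ} {f' g' x : F}

theorem HasGradientAt.add (hf : HasGradientAt f f' x) (hg : HasGradientAt g g' x) :
    HasGradientAt (fun y => f y + g y) (f' + g') x := by
  rw [hasGradientAt_iff_hasFDerivAt] at *
  rw [map_add]
  exact hf.add hg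

theorem HasGradientAt.sub (hf : HasGradientAt f f' x) (hg : HasGradientAt g g' x) :
    HasGradientAt (fun y => f y - g y) (f' - g') x := by
  rw [hasGradientAt_iff_hasFDerivAt] at *
  rw [map_sub]
  exact hf.sub hg

theorem HasGradientAt.const_mul (c : ℝ) (hf : HasGradientAt f f' x) :
    HasGradientAt (fun y => c * f y) (c • f') x := by
  rw [hasGradientAt_iff_hasFDerivAt] at *
  rw [map_smul]
  exact hf.const_mul c

theorem HasGradientAt.mul (hf : HasGradientAt f f' x) (hg : HasGradientAt g g' x) :
    HasGradientAt (fun y => f y * g y) (f x • g' + g x • f') x := by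
  rw [hasGradientAt_iff_hasFDerivAt] at *
  rw [map_add, map_smul, map_smul]
  exact hf.mul hg

theorem HasDerivAt.comp_hasGradientAt {h : ℝ → ℝ} {h' : ℝ} (hh : HasDerivAt h h' (f x))
    (hf : HasGradientAt f f' x) : HasGradientAt (fun y => h (f y)) (h' • f') x := by
  rw [hasGradientAt_iff_hasFDerivAt] at *
  rw [map_smul]
  exact hh.comp_hasFDerivAt x hf

theorem HasGradientAt.log (hf : HasGradientAt f f' x) (hx : f x ≠ 0) :
    HasGradientAt (fun y => Real.log (f y)) ((f x)⁻¹ • f') x :=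
  (hasDerivAt_log hx).comp_hasGradientAt hf

theorem HasGradientAt.inv (hf : HasGradientAt f f' x) (hx : f x ≠ 0) :
    HasGradientAt (fun y => (f y)⁻¹) (-((f x) ^ 2)⁻¹ • f') x :=
  (hasDerivAt_inv hx).comp_hasGradientAt hf

theorem HasGradientAt.pow (n : ℕ) (hf : HasGradientAt f f' x) :
    HasGradientAt (fun y => f y ^ n) ((n * f x ^ (n - 1)) • f') x :=
  (hasDerivAt_pow n (f x)).comp_hasGradientAt hf

theorem HasGradientAt.entropyDensity {ρ P : F → ℝ} {ρ' P' : F} (γ : ℝ)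
    (hρ : HasGradientAt ρ ρ' x) (hP : HasGradientAt P P' x) (hρ₀ : ρ x ≠ 0) (hP₀ : P x ≠ 0) :
    HasGradientAt (fun y => -(ρ y * (Real.log (P y) - γ * Real.log (ρ y))) / (γ - 1))
      ((γ - 1)⁻¹ • ((γ - (Real.log (P x) - γ * Real.log (ρ x))) • ρ' - (ρ x / P x) • P')) x := by
  convert (hρ.mul ((hP.log hP₀).sub ((hρ.log hρ₀).const_mul γ))).const_mul (-(γ - 1)⁻¹) using 1
  · ext y
    ring
  · match_scalars
    · field_simp
      ring
    · ring

end GradientCalculus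

theorem hasGradientAt_presQ (γ : ℝ) {q : EuclideanSpace ℝ (Fin 8)} (hρ : q 0 ≠ 0) :
    HasGradientAt (presQ γ) ((γ - 1) • !₂[((q 1 / q 0) ^ 2 + (q 2 / q 0) ^ 2 + (q 3 / q 0) ^ 2) / 2,
      -(q 1 / q 0), -(q 2 / q 0), -(q 3 / q 0), 1, -q 5, -q 6, -q 7]) q := by
  have hcoord := fun i : Fin 8 => EuclideanSpace.hasGradientAt_apply i q
  have hkin := ((((hcoord 1).pow 2).add ((hcoord 2).pow 2)).add ((hcoord 3).pow 2)).mul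
    (((hcoord 0).const_mul 2).inv (mul_ne_zero two_ne_zero hρ))
  have hmag := ((((hcoord 5).pow 2).add ((hcoord 6).pow 2)).add ((hcoord 7).pow 2)).const_mul
    (1 / 2)
  convert (((hcoord 4).sub hkin).sub hmag).const_mul (γ - 1) using 1
  · ext y
    simp only [presQ]
    ring
  · congr 1
    ext i
    fin_cases i <;> simp <;> field_simp

theorem entropy_gradient_general (γ : ℝ) (q : EuclideanSpace ℝ (Fin 8))
    (hρ : 0 < q 0) (hp : 0 < presQ γ q) :
    HasGradientAt (entUQ γ)
      ((WithLp.equiv 2 (Fin 8 → ℝ)).symm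
        ![(γ - entSQ γ q) / (γ - 1)
            - q 0 * ((q 1 / q 0) ^ 2 + (q 2 / q 0) ^ 2 + (q 3 / q 0) ^ 2) / (2 * presQ γ q),
          q 0 * (q 1 / q 0) / presQ γ q,
          q 0 * (q 2 / q 0) / presQ γ q,
          q 0 * (q 3 / q 0) / presQ γ q,
          -(q 0 / presQ γ q),
          q 0 * q 5 / presQ γ q,
          q 0 * q 6 / presQ γ q,
          q 0 * q 7 / presQ γ q]) q := by
  have hγ : γ - 1 ≠ 0 := left_ne_zero_of_mul hp.ne'
  have hU : HasGradientAt (entUQ γ) _ q :=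
    (EuclideanSpace.hasGradientAt_apply 0 q).entropyDensity γ (hasGradientAt_presQ γ hρ.ne')
      hρ.ne' hp.ne'
  convert hU using 1
  ext i
  fin_cases i <;> simp [entSQ] <;> field_simp

/-- at every q with ρ = q₀ > 0 and p(q) > 0, the entropy density U is
differentiable and its gradient (w.r.t. the standard inner product on ℝ⁸) is the vector
of entropy variables. -/
theorem entropy_gradient (γ : ℝ) (hγ : 1 < γ) (q : EuclideanSpace ℝ (Fin 8))
    (hρ : 0 < q 0) (hp : 0 < presQ γ q) :
    HasGradientAt (entUQ γ)
      ((WithLp.equiv 2 (Fin 8 → ℝ)).symm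
        ![(γ - entSQ γ q) / (γ - 1)
            - q 0 * ((q 1 / q 0) ^ 2 + (q 2 / q 0) ^ 2 + (q 3 / q 0) ^ 2) / (2 * presQ γ q),
          q 0 * (q 1 / q 0) / presQ γ q,
          q 0 * (q 2 / q 0) / presQ γ q,
          q 0 * (q 3 / q 0) / presQ γ q,
          -(q 0 / presQ γ q),
          q 0 * q 5 / presQ γ q,
          q 0 * q 6 / presQ γ q,
          q 0 * q 7 / presQ γ q]) q :=
  entropy_gradient_general γ q hρ hp

end
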